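/- Let A be a perfect MV-algebra. Then the radical Rad(A) = {x ∈ A : x ≤ ¬x}, equipped with the restrictions of ⊕, ≤, inf, sup, and 0, is a cancellative lattice-ordered abelian monoid: in particular, if x, y, a ∈ Rad(A) and x ⊕ a = y ⊕ a, then x = y. -/

import Mathlib

/-- An MV-algebra `(A, ⊕, ¬, 0)`. -/
class MV (A : Type*) where
  op : A → A → A
  neg : A → A
  zero : A
  op_assoc : ∀ x y z : A, op (op x y) z = op x (op y z)
  op_comm : ∀ x y : A, op x y = op y x
  op_zero : ∀ x : A, op x zero = x
  neg_neg : ∀ x : A, neg (neg x) = x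
  op_neg_zero : ∀ x : A, op x (neg zero) = neg zero
  mv6 : ∀ x y : A, op (neg (op (neg x) y)) y = op (neg (op (neg y) x)) x

namespace MV

variable {A : Type*} [MV A]

/-- `1 := ¬0`. -/
def one : A := neg zero

/-- `x ⊙ y := ¬(¬x ⊕ ¬y)`. -/
def odot (x y : A) : A := neg (op (neg x) (neg y))

/-- `sup(x,y) := (x ⊙ ¬y) ⊕ y`. -/
def ssup (x y : A) : A := op (odot x (neg y)) y

/-- `inf(x,y) := (x ⊕ ¬y) ⊙ y`. -/
def sinf (x y : A) : A := odot (op x (neg y)) y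

/-- `x ≤ y` iff `¬x ⊕ y = 1`. -/
def le (x y : A) : Prop := op (neg x) y = one

/-- `x ≤ y` iff `inf(x,y) = x`. -/
def leInf (x y : A) : Prop := sinf x y = x

/-- `n`-fold sum `nx = x ⊕ ⋯ ⊕ x`. -/
def nsm : ℕ → A → A
  | 0, _ => zero
  | n + 1, x => op x (nsm n x)

/-- `x² := x ⊙ x`. -/
def sq (x : A) : A := odot x x

end MV

namespace MV

/-- A perfect MV-algebra: nontrivial, satisfying `x² ⊕ x² = (x ⊕ x)²` and,
for every `x`, either `x ≤ ¬x` or `¬x ≤ x`. -/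
def Perfect (A : Type*) [MV A] : Prop :=
  (zero : A) ≠ one ∧
  (∀ x : A, op (sq x) (sq x) = sq (op x x)) ∧
  (∀ x : A, le x (neg x) ∨ le (neg x) x)

end MV

/-!
Apart from closure of the radical under `⊕`, everything holds in any MV-algebra: `≤` is a
lattice order with join `ssup` and meet `sinf`, `⊕` is monotone, and the radical is a down-set.
Cancellation holds for all `x, y ≤ ¬a`, because then `(x ⊕ a) ⊙ ¬a = x`, and `x ⊕ a` in the
radical forces `x ≤ x ⊕ a ≤ ¬(x ⊕ a) ≤ ¬a`.

Perfection is needed for closure under `⊕`. Squares of radical elements vanish, so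
`(x ⊕ x)² = x² ⊕ x² = 0` puts `u = x ⊕ x` in the radical. If `x ⊕ y` were not in the radical,
then `u ⊕ v = 1` for `v = y ⊕ y`, and `¬u ≤ v ≤ ¬v ≤ u` gives `u = ¬u`; then `1 = u ⊕ u` is
in the radical, i.e. `1 ≤ ¬1 = 0`, contradicting nontriviality.
-/

namespace MV

variable {A : Type*} [MV A]

-- Only a local instance: it lets `abel` rearrange `⊕`-sums.
abbrev toAddCommMonoid : AddCommMonoid A where
  add := op
  zero := MV.zero
  add_assoc := op_assoc
  add_comm := op_comm
  add_zero := op_zero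
  zero_add x := (op_comm _ x).trans (op_zero x)
  nsmul := nsm
  nsmul_zero _ := rfl
  nsmul_succ n x := op_comm x (nsm n x)

attribute [local instance] toAddCommMonoid

theorem op_eq_add (x y : A) : op x y = x + y := rfl

theorem neg_injective : Function.Injective (neg : A → A) := fun x y h => by
  rw [← MV.neg_neg x, h, MV.neg_neg]

theorem op_one (x : A) : op x one = one := op_neg_zero x

theorem one_op (x : A) : op one x = one := (op_comm _ _).trans (op_one x)

theorem zero_op (x : A) : op zero x = x := (op_comm _ _).trans (op_zero x)

theorem neg_one : (neg one : A) = zero := MV.neg_neg _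

theorem neg_op_self (x : A) : op (neg x) x = one := by
  simpa only [op_one, neg_one, zero_op] using (mv6 x (one : A)).symm

theorem neg_le_iff {x y : A} : le (neg x) y ↔ op x y = one := by
  rw [le, MV.neg_neg]

theorem le_neg_comm {x y : A} : le x (neg y) ↔ le y (neg x) := by
  rw [le, le, op_comm]

protected theorem le_refl (x : A) : le x x := neg_op_self x

theorem le_op_right (x y : A) : le x (op x y) := by
  rw [le, show op (neg x) (op x y) = op y (op (neg x) x) by simp only [op_eq_add]; abel,
    neg_op_self, op_one]

theorem le_op_left (x y : A) : le x (op y x) := op_comm x y ▸ le_op_right x y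

theorem ssup_eq (x y : A) : ssup x y = op (neg (op (neg x) y)) y := by
  rw [ssup, odot, MV.neg_neg]

theorem ssup_comm (x y : A) : ssup x y = ssup y x := by
  rw [ssup_eq, ssup_eq, mv6]

theorem ssup_eq_left_of_le {x y : A} (h : le y x) : ssup x y = x := by
  rw [ssup_comm, ssup_eq, h, neg_one, zero_op]

theorem ssup_eq_right_of_le {x y : A} (h : le x y) : ssup x y = y := by
  rw [ssup_comm, ssup_eq_left_of_le h]

theorem eq_op_of_le {x y : A} (h : le x y) : y = op x (neg (op (neg y) x)) := by
  conv_lhs => rw [← ssup_eq_left_of_le h, ssup_eq, op_comm]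

protected theorem le_antisymm {x y : A} (hxy : le x y) (hyx : le y x) : x = y :=
  (ssup_eq_left_of_le hyx).symm.trans (ssup_eq_right_of_le hxy)

protected theorem le_trans {x y z : A} (hxy : le x y) (hyz : le y z) : le x z := by
  rw [le, eq_op_of_le hyz, ← op_assoc, hxy, one_op]

theorem op_le_op_left {x y : A} (t : A) (h : le x y) : le (op t x) (op t y) := by
  rw [eq_op_of_le h, ← op_assoc]
  exact le_op_right _ _

theorem op_le_op_right {x y : A} (t : A) (h : le x y) : le (op x t) (op y t) := by
  simpa only [op_comm _ t] using op_le_op_left t h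

theorem neg_le_neg {x y : A} (h : le x y) : le (neg y) (neg x) := by
  rwa [le, MV.neg_neg, op_comm]

theorem neg_le_comm {x y : A} (h : le (neg x) y) : le (neg y) x := by
  simpa only [MV.neg_neg] using neg_le_neg h

theorem le_ssup_right (x y : A) : le y (ssup x y) := by
  rw [ssup_eq]
  exact le_op_left _ _

theorem le_ssup_left (x y : A) : le x (ssup x y) := ssup_comm y x ▸ le_ssup_right y x

theorem ssup_le {x y z : A} (hxz : le x z) (hyz : le y z) : le (ssup x y) z := by
  have h := op_le_op_right y (neg_le_neg (op_le_op_right y (neg_le_neg hxz)))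
  rwa [← ssup_eq, ← ssup_eq, ssup_eq_left_of_le hyz] at h

theorem sinf_eq_neg_ssup (x y : A) : sinf x y = neg (ssup (neg x) (neg y)) := by
  rw [sinf, ssup, odot, odot, MV.neg_neg, MV.neg_neg]

theorem sinf_le_left (x y : A) : le (sinf x y) x := by
  rw [sinf_eq_neg_ssup]
  exact neg_le_comm (le_ssup_left _ _)

theorem sinf_le_right (x y : A) : le (sinf x y) y := by
  rw [sinf_eq_neg_ssup]
  exact neg_le_comm (le_ssup_right _ _)

theorem le_sinf {x y z : A} (hzx : le z x) (hzy : le z y) : le z (sinf x y) := by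
  rw [sinf_eq_neg_ssup]
  exact le_neg_comm.mp (ssup_le (neg_le_neg hzx) (neg_le_neg hzy))

theorem ssup_le_op (x y : A) : le (ssup x y) (op x y) := ssup_le (le_op_right x y) (le_op_left y x)

theorem odot_op_neg_of_le_neg {x a : A} (h : le x (neg a)) : odot (op x a) (neg a) = x := by
  have h' : op (neg (op x a)) a = neg x := by
    simpa only [ssup_eq, MV.neg_neg] using ssup_eq_left_of_le (le_neg_comm.mp h)
  rw [odot, MV.neg_neg, h', MV.neg_neg]

theorem op_right_cancel_of_le_neg {x y a : A} (hx : le x (neg a)) (hy : le y (neg a))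
    (h : op x a = op y a) : x = y := by
  rw [← odot_op_neg_of_le_neg hx, h, odot_op_neg_of_le_neg hy]

def radical (A : Type*) [MV A] : Set A := {x | le x (neg x)}

theorem mem_radical {x : A} : x ∈ radical A ↔ le x (neg x) := Iff.rfl

theorem zero_mem_radical : (zero : A) ∈ radical A := op_one one

theorem mem_radical_iff_sq_eq_zero {x : A} : x ∈ radical A ↔ sq x = zero := by
  rw [mem_radical, le, sq, odot, ← neg_one, neg_injective.eq_iff]

theorem mem_radical_of_le {x y : A} (h : le x y) (hy : y ∈ radical A) : x ∈ radical A :=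
  MV.le_trans h (MV.le_trans hy (neg_le_neg h))

theorem le_neg_of_op_mem_radical {x a : A} (h : op x a ∈ radical A) : le x (neg a) :=
  MV.le_trans (le_op_right x a) (MV.le_trans h (neg_le_neg (le_op_left a x)))

namespace Perfect

variable (hA : Perfect A)
include hA

theorem op_self_mem_radical {x : A} (hx : x ∈ radical A) : op x x ∈ radical A := by
  rw [mem_radical_iff_sq_eq_zero] at hx ⊢
  rw [← hA.2.1, hx, op_zero]

theorem not_neg_le_of_mem_radical {x : A} (hx : x ∈ radical A) : ¬ le (neg x) x := by
  intro h
  have hxx : op x x = one := by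
    conv_lhs => arg 1; rw [MV.le_antisymm hx h]
    exact neg_op_self x
  have h1 := hA.op_self_mem_radical hx
  rw [hxx, mem_radical, le, neg_one, op_zero] at h1
  exact hA.1 h1

theorem op_mem_radical {x y : A} (hx : x ∈ radical A) (hy : y ∈ radical A) :
    op x y ∈ radical A := by
  refine (hA.2.2 (op x y)).resolve_right fun h => ?_
  have hsum : op (op x x) (op y y) = one := by
    rw [show op (op x x) (op y y) = op (op x y) (op x y) by simp only [op_eq_add]; abel,
      neg_le_iff.mp h]
  have hx2 := hA.op_self_mem_radical hx
  have hy2 := hA.op_self_mem_radical hy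
  exact hA.not_neg_le_of_mem_radical hx2 <|
    MV.le_trans (neg_le_iff.mpr hsum) (MV.le_trans hy2 (neg_le_iff.mpr ((op_comm _ _).trans hsum)))

end Perfect

end MV

open MV in
/-- In a perfect MV-algebra `A`, the radical `R = {x : x ≤ ¬x}` with the restrictions of
`⊕`, `≤`, `inf`, `sup`, `0` is a cancellative lattice-ordered abelian monoid; in
particular `x ⊕ a = y ⊕ a` implies `x = y` for `x, y, a` in the radical. -/
theorem perfect_radical_cancellative_lmonoid {A : Type*} [MV A] (hA : Perfect A) :
    let R : Set A := {x : A | le x (neg x)}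
    -- closure of the radical under the operations
    ((zero : A) ∈ R) ∧
    (∀ x ∈ R, ∀ y ∈ R, op x y ∈ R) ∧
    (∀ x ∈ R, ∀ y ∈ R, sinf x y ∈ R) ∧
    (∀ x ∈ R, ∀ y ∈ R, ssup x y ∈ R) ∧
    -- abelian monoid laws
    (∀ x ∈ R, ∀ y ∈ R, ∀ z ∈ R, op (op x y) z = op x (op y z)) ∧
    (∀ x ∈ R, ∀ y ∈ R, op x y = op y x) ∧
    (∀ x ∈ R, op x zero = x) ∧
    -- partial order
    (∀ x ∈ R, le x x) ∧
    (∀ x ∈ R, ∀ y ∈ R, le x y → le y x → x = y) ∧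
    (∀ x ∈ R, ∀ y ∈ R, ∀ z ∈ R, le x y → le y z → le x z) ∧
    -- lattice: `sinf` is the infimum and `ssup` the supremum
    (∀ x ∈ R, ∀ y ∈ R, le (sinf x y) x ∧ le (sinf x y) y ∧
      ∀ z ∈ R, le z x → le z y → le z (sinf x y)) ∧
    (∀ x ∈ R, ∀ y ∈ R, le x (ssup x y) ∧ le y (ssup x y) ∧
      ∀ z ∈ R, le x z → le y z → le (ssup x y) z) ∧
    -- translation invariance
    (∀ x ∈ R, ∀ y ∈ R, ∀ t ∈ R, le x y → le (op t x) (op t y)) ∧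
    -- cancellation
    (∀ x ∈ R, ∀ y ∈ R, ∀ a ∈ R, op x a = op y a → x = y) := by
  intro R
  refine ⟨zero_mem_radical, fun x hx y hy => hA.op_mem_radical hx hy,
    fun x hx y _ => mem_radical_of_le (sinf_le_left x y) hx,
    fun x hx y hy => mem_radical_of_le (ssup_le_op x y) (hA.op_mem_radical hx hy),
    fun x _ y _ z _ => op_assoc x y z, fun x _ y _ => op_comm x y, fun x _ => op_zero x,
    fun x _ => MV.le_refl x, fun x _ y _ => MV.le_antisymm, fun x _ y _ z _ => MV.le_trans,
    fun x _ y _ => ⟨sinf_le_left x y, sinf_le_right x y, fun z _ => le_sinf⟩,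
    fun x _ y _ => ⟨le_ssup_left x y, le_ssup_right x y, fun z _ => ssup_le⟩,
    fun x _ y _ t _ => op_le_op_left t, fun x hx y hy a ha => ?_⟩
  exact op_right_cancel_of_le_neg (le_neg_of_op_mem_radical (hA.op_mem_radical hx ha))
    (le_neg_of_op_mem_radical (hA.op_mem_radical hy ha))
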